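/- arXiv:1705.03296 — 3 statements merged into one kernel-verified Lean document; each statement's English description precedes it below -/
import Mathlib

section
/- Let η ∈ (0, 100) and let c ∈ (0, 1) satisfy (1+η)(1 − c + c·log c) > 1 + η/2. Then there exists m₀ such that for all integers m ≥ m₀ and all ρ ∈ (0, 1) with (1+η) log m ≤ m ρ ≤ 101 log m, a binomial random variable B(m−1, ρ) with m−1 trials and success probability ρ satisfies ℙ( B(m−1, ρ) ≤ c m ρ ) ≤ 2 m^{−(1+η/2)}. -/
/-!
Chernoff's bound: for `k ≤ t` and `0 < c ≤ 1` we have `c ^ (k - t) ≥ 1`, so the lower tail is at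
most `c ^ (-t)` times the probability generating function `(1 - (1 - c) ρ) ^ n` of `B(n, ρ)` at
`c`. With `t = c m ρ` and `n = m - 1` this gives the bound `exp (-m ρ A + (1 - c) ρ)`, where
`A = 1 - c + c log c ≥ 0`. Since `m ρ ≥ (1 + η) log m` and `(1 + η) A = 1 + η/2 + δ` with
`δ > 0`, the exponent is at most `-(1 + η/2) log m` as soon as `δ log m ≥ 1`.
-/

open Finset Real Filter

theorem sum_binomial_lowerTail_le_rpow_mul_pow (n : ℕ) {ρ c t : ℝ} (hρ0 : 0 ≤ ρ) (hρ1 : ρ ≤ 1)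
    (hc0 : 0 < c) (hc1 : c ≤ 1) :
    (∑ k ∈ range (n + 1), if (k : ℝ) ≤ t then
        (n.choose k : ℝ) * ρ ^ k * (1 - ρ) ^ (n - k) else 0)
      ≤ c ^ (-t) * (1 - (1 - c) * ρ) ^ n := by
  have hterm : ∀ k ∈ range (n + 1), (if (k : ℝ) ≤ t then
        (n.choose k : ℝ) * ρ ^ k * (1 - ρ) ^ (n - k) else 0)
      ≤ c ^ (-t) * ((c * ρ) ^ k * (1 - ρ) ^ (n - k) * n.choose k) := by
    intro k _
    have h1ρ : 0 ≤ 1 - ρ := by linarith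
    split_ifs with hkt
    · have hone : 1 ≤ c ^ (-t) * c ^ k := by
        rw [← rpow_natCast, ← rpow_add hc0]
        exact one_le_rpow_of_pos_of_le_one_of_nonpos hc0 hc1 (by linarith)
      calc (n.choose k : ℝ) * ρ ^ k * (1 - ρ) ^ (n - k)
          ≤ (c ^ (-t) * c ^ k) * ((n.choose k : ℝ) * ρ ^ k * (1 - ρ) ^ (n - k)) :=
            le_mul_of_one_le_left (by positivity) hone
        _ = c ^ (-t) * ((c * ρ) ^ k * (1 - ρ) ^ (n - k) * n.choose k) := by ring
    · have := rpow_pos_of_pos hc0 (-t)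
      positivity
  calc _ ≤ ∑ k ∈ range (n + 1), c ^ (-t) * ((c * ρ) ^ k * (1 - ρ) ^ (n - k) * n.choose k) :=
        sum_le_sum hterm
    _ = c ^ (-t) * (c * ρ + (1 - ρ)) ^ n := by rw [← mul_sum, ← add_pow]
    _ = c ^ (-t) * (1 - (1 - c) * ρ) ^ n := by ring_nf

theorem sum_binomial_lowerTail_le_exp (n : ℕ) {ρ c t : ℝ} (hρ0 : 0 ≤ ρ) (hρ1 : ρ ≤ 1)
    (hc0 : 0 < c) (hc1 : c ≤ 1) :
    (∑ k ∈ range (n + 1), if (k : ℝ) ≤ t then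
        (n.choose k : ℝ) * ρ ^ k * (1 - ρ) ^ (n - k) else 0)
      ≤ exp (-(t * log c) - n * ((1 - c) * ρ)) := by
  have hbase : 0 ≤ 1 - (1 - c) * ρ := by nlinarith
  calc _ ≤ c ^ (-t) * (1 - (1 - c) * ρ) ^ n :=
        sum_binomial_lowerTail_le_rpow_mul_pow n hρ0 hρ1 hc0 hc1
    _ ≤ c ^ (-t) * exp (-((1 - c) * ρ)) ^ n := by
        gcongr
        exact one_sub_le_exp_neg _
    _ = exp (-(t * log c) - n * ((1 - c) * ρ)) := by
        rw [rpow_def_of_pos hc0, ← exp_nat_mul, ← exp_add]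
        ring_nf

theorem one_sub_add_mul_log_nonneg {c : ℝ} (hc : 0 < c) : 0 ≤ 1 - c + c * log c := by
  have h := mul_le_mul_of_nonneg_left (one_sub_inv_le_log_of_pos hc) hc.le
  rw [mul_sub, mul_inv_cancel₀ hc.ne'] at h
  linarith

theorem stmt13_general (η c : ℝ) (hc0 : 0 < c) (hc1 : c < 1)
    (hcond : 1 + η / 2 < (1 + η) * (1 - c + c * Real.log c)) :
    ∃ m₀ : ℕ, ∀ m : ℕ, m₀ ≤ m → ∀ ρ : ℝ, 0 < ρ → ρ < 1 →
      (1 + η) * Real.log m ≤ m * ρ → (m : ℝ) * ρ ≤ 101 * Real.log m →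
      (∑ k ∈ Finset.range m, if (k : ℝ) ≤ c * m * ρ then
          ((m - 1).choose k : ℝ) * ρ ^ k * (1 - ρ) ^ (m - 1 - k) else 0)
        ≤ 2 * (m : ℝ) ^ (-(1 + η / 2)) := by
  set A := 1 - c + c * log c
  have hA : 0 ≤ A := one_sub_add_mul_log_nonneg hc0
  set δ := (1 + η) * A - (1 + η / 2)
  have hδ : 0 < δ := sub_pos.2 hcond
  obtain ⟨m₀, hm₀⟩ := eventually_atTop.1 <|
    ((tendsto_log_atTop.comp tendsto_natCast_atTop_atTop).eventually_ge_atTop (1 / δ)).and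
      (eventually_ge_atTop 1)
  refine ⟨m₀, fun m hm ρ hρ0 hρ1 hlow _ => ?_⟩
  obtain ⟨hlog, hm1⟩ : 1 / δ ≤ log m ∧ 1 ≤ m := hm₀ m hm
  have hδlog : 1 ≤ δ * log m := by rwa [div_le_iff₀' hδ] at hlog
  have hρc : (1 - c) * ρ ≤ 1 := by nlinarith
  have hexponent : -(c * m * ρ * log c) - ((m - 1 : ℕ) : ℝ) * ((1 - c) * ρ)
      ≤ log m * (-(1 + η / 2)) := by
    have hmA : (1 + η) * log m * A ≤ m * ρ * A := mul_le_mul_of_nonneg_right hlow hA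
    rw [Nat.cast_pred hm1]
    simp only [A, δ] at hmA hδlog
    linarith
  have hm : (0 : ℝ) < m := by exact_mod_cast hm1
  rw [show range m = range (m - 1 + 1) by rw [Nat.sub_add_cancel hm1]]
  calc _ ≤ exp (-(c * m * ρ * log c) - ((m - 1 : ℕ) : ℝ) * ((1 - c) * ρ)) :=
        sum_binomial_lowerTail_le_exp (m - 1) hρ0.le hρ1.le hc0 hc1.le
    _ ≤ exp (log m * (-(1 + η / 2))) := exp_le_exp.2 hexponent
    _ = (m : ℝ) ^ (-(1 + η / 2)) := (rpow_def_of_pos hm _).symm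
    _ ≤ 2 * (m : ℝ) ^ (-(1 + η / 2)) := le_mul_of_one_le_left (rpow_nonneg hm.le _) one_le_two

/-- lower-tail estimate for the binomial distribution. If `η ∈ (0,100)` and
`c ∈ (0,1)` satisfy `(1+η)(1 − c + c log c) > 1 + η/2`, then there is `m₀` such that for all
`m ≥ m₀` and `ρ ∈ (0,1)` with `(1+η) log m ≤ mρ ≤ 101 log m`,
`ℙ(B(m−1,ρ) ≤ cmρ) ≤ 2 m^{−(1+η/2)}`. -/
theorem stmt13 (η c : ℝ) (hη0 : 0 < η) (hη1 : η < 100) (hc0 : 0 < c) (hc1 : c < 1)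
    (hcond : 1 + η / 2 < (1 + η) * (1 - c + c * Real.log c)) :
    ∃ m₀ : ℕ, ∀ m : ℕ, m₀ ≤ m → ∀ ρ : ℝ, 0 < ρ → ρ < 1 →
      (1 + η) * Real.log m ≤ m * ρ → (m : ℝ) * ρ ≤ 101 * Real.log m →
      (∑ k ∈ Finset.range m, if (k : ℝ) ≤ c * m * ρ then
          ((m - 1).choose k : ℝ) * ρ ^ k * (1 - ρ) ^ (m - 1 - k) else 0)
        ≤ 2 * (m : ℝ) ^ (-(1 + η / 2)) :=
  stmt13_general η c hc0 hc1 hcond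
end

section
/- Let V be a finite set with n = |V| ≥ 1, and let ω₁, ω₂ : V×V → ℝ≥0 be symmetric weight functions with all degrees positive: d_{ω₁}(s) > 0 and d_{ω₂}(s) > 0 for all s. Let D_i = ∑_{s∈V} d_{ω_i}(s) and δ = ∑_{s∈V} ( |d_{ω₁}(s) − D₁/n| / D₁ + |d_{ω₂}(s) − D₂/n| / D₂ ). Then ‖A⁰_{ω₁+ω₂}‖ ≤ δ + (1−δ) · max( ‖A⁰_{ω₁}‖, ‖A⁰_{ω₂}‖ ). -/
open scoped BigOperators
open Finset MeasureTheory

noncomputable section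

variable {V : Type*}

def wdeg [Fintype V] (ω : V → V → ℝ) (s : V) : ℝ := ∑ t, ω s t

def nu [Fintype V] (ω : V → V → ℝ) (s : V) : ℝ := wdeg ω s / ∑ t, wdeg ω t

def edgeP [Fintype V] (ω : V → V → ℝ) (s t : V) : ℝ := ω s t / ∑ u, ∑ v, ω u v

def SymmW (ω : V → V → ℝ) : Prop := ∀ s t, ω s t = ω t s

def NonnegW (ω : V → V → ℝ) : Prop := ∀ s t, 0 ≤ ω s t

def ConnW (ω : V → V → ℝ) : Prop := (SimpleGraph.fromRel fun s t => 0 < ω s t).Connected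

def lpNormW [Fintype V] (ω : V → V → ℝ) (p : ℝ) {X : Type*} [NormedAddCommGroup X]
    (f : V → X) : ℝ := (∑ s, nu ω s * ‖f s‖ ^ p) ^ (1 / p)

def gradNormW [Fintype V] (ω : V → V → ℝ) (p : ℝ) {X : Type*} [NormedAddCommGroup X]
    (f : V → X) : ℝ := (∑ s, ∑ t, edgeP ω s t * ‖f t - f s‖ ^ p) ^ (1 / p)

def poincareConst [Fintype V] (ω : V → V → ℝ) (p : ℝ) (X : Type*) [NormedAddCommGroup X] : ℝ :=
  sInf {π : ℝ | 0 ≤ π ∧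
    ∀ f : V → X, (⨅ x : X, lpNormW ω p fun s => f s - x) ≤ π * gradNormW ω p f}

def markovW [Fintype V] (ω : V → V → ℝ) {X : Type*} [AddCommGroup X] [Module ℝ X]
    (f : V → X) (s : V) : X := (wdeg ω s)⁻¹ • ∑ t, ω s t • f t

/-- The norm of `L²(V, d_ω)` (weighted by the degrees). -/
def l2d [Fintype V] (ω : V → V → ℝ) (f : V → ℂ) : ℝ :=
  Real.sqrt (∑ s, wdeg ω s * ‖f s‖ ^ 2)

/-- `‖A⁰_ω‖`: operator norm of the Markov operator restricted to the orthogonal complement of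
the constants in `L²(V, d_ω)`. -/
def opA0 [Fintype V] (ω : V → V → ℝ) : ℝ :=
  sInf {K : ℝ | 0 ≤ K ∧ ∀ f : V → ℂ, (∑ s, (wdeg ω s : ℂ) * f s) = 0 →
    l2d ω (markovW ω f) ≤ K * l2d ω f}

/-!
Write `Q_ω(f) = ⟨A_ω f, f⟩ = ∑ s t, ω s t ⟪f t, f s⟫` (`edgeForm`). As `A_ω` is self-adjoint and
preserves the functions of `d_ω`-mean zero, polarization bounds its norm on them by any `C` with
`|Q_ω(f)| ≤ C ‖f‖²` there.

Let `ω = ω₁ + ω₂`, `M = max ‖A⁰_{ω₁}‖ ‖A⁰_{ω₂}‖` and let `f` have `d_ω`-mean zero. Splitting off the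
`d_{ωᵢ}`-mean of `f` gives `|Q_{ωᵢ}(f)| ≤ M ‖f‖²_{ωᵢ} + (1 - M) ‖zᵢ‖² / Dᵢ` with
`zᵢ = ∑ s, d_{ωᵢ}(s) f(s)`. Since `z₁ = -z₂`, `z₁ = D₁ D₂ / (D₁ + D₂) • ∑ s, (ν₁ s - ν₂ s) f(s)` for the
degree distributions `νᵢ = d_{ωᵢ} / Dᵢ`, and Cauchy–Schwarz gives
`‖z₁‖² (1 / D₁ + 1 / D₂) ≤ (∑ s, |ν₁ s - ν₂ s|) ‖f‖²_ω`. Finally `∑ s, |ν₁ s - ν₂ s| ≤ δ` by the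
triangle inequality through the uniform distribution.
-/

open scoped RealInnerProductSpace

lemma le_sq_mul_of_forall_two_mul_le {N F C : ℝ} (hC : 0 ≤ C)
    (h : ∀ t, 2 * t * N ≤ C * (F + t ^ 2 * N)) : N ≤ C ^ 2 * F := by
  rcases hC.eq_or_lt with rfl | hC
  · have h1 := h 1
    norm_num at h1 ⊢
    linarith
  · have h' := h C⁻¹
    field_simp at h'
    nlinarith

lemma sq_mul_div_mul_le_abs {a b A B : ℝ} (ha : 0 < a) (hb : 0 < b) (hA : 0 < A) (hB : 0 < B) :
    (A * B / (A + B) * (a / A - b / B)) ^ 2 / (a + b) * (1 / A + 1 / B) ≤ |a / A - b / B| := by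
  set w := a / A - b / B
  have hw : A * B * |w| ≤ (A + B) * (a + b) := calc
    A * B * |w| ≤ A * B * (a / A + b / B) := by
        gcongr
        exact (abs_sub _ _).trans_eq
          (by rw [abs_of_pos (by positivity), abs_of_pos (by positivity)])
    _ = B * a + A * b := by field_simp
    _ ≤ (A + B) * (a + b) := by nlinarith
  have hlhs : (A * B / (A + B) * w) ^ 2 / (a + b) * (1 / A + 1 / B)
      = A * B * w ^ 2 / ((A + B) * (a + b)) := by
    field_simp
    ring
  rw [hlhs, div_le_iff₀ (by positivity), ← sq_abs w]
  nlinarith [abs_nonneg w]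

lemma abs_div_sub_div_le (a b A B n : ℝ) (hA : 0 < A) (hB : 0 < B) :
    |a / A - b / B| ≤ |a - A / n| / A + |b - B / n| / B := by
  have h : a / A - b / B = (a - A / n) / A - (b - B / n) / B := by
    field_simp
    ring
  rw [h, ← abs_of_pos hA, ← abs_of_pos hB, ← abs_div, ← abs_div, abs_of_pos hA, abs_of_pos hB]
  exact abs_sub _ _

section WeightedL2

variable {E : Type*} [NormedAddCommGroup E] [InnerProductSpace ℝ E] [Fintype V]

def wInner (d : V → ℝ) (f g : V → E) : ℝ := ∑ s, d s * ⟪f s, g s⟫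

def meanZero (d : V → ℝ) : Submodule ℝ (V → E) where
  carrier := {f | ∑ s, d s • f s = 0}
  add_mem' {f g} (hf : ∑ s, d s • f s = 0) (hg : ∑ s, d s • g s = 0) := by
    simp [smul_add, sum_add_distrib, hf, hg]
  zero_mem' := by simp
  smul_mem' c f (hf : ∑ s, d s • f s = 0) := by
    simp [smul_comm _ c, ← smul_sum, hf]

lemma wInner_self (d : V → ℝ) (f : V → E) : wInner d f f = ∑ s, d s * ‖f s‖ ^ 2 := by
  simp only [wInner, real_inner_self_eq_norm_sq]

lemma wInner_self_nonneg {d : V → ℝ} (hd : ∀ s, 0 ≤ d s) (f : V → E) : 0 ≤ wInner d f f := by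
  rw [wInner_self]; exact sum_nonneg fun s _ => mul_nonneg (hd s) (sq_nonneg _)

lemma wInner_smul_right (d : V → ℝ) (f g : V → E) (c : ℝ) :
    wInner d f (c • g) = c * wInner d f g := by
  simp only [wInner, Pi.smul_apply, real_inner_smul_right, mul_sum]
  exact sum_congr rfl fun s _ => by ring

lemma wInner_smul_left (d : V → ℝ) (f g : V → E) (c : ℝ) :
    wInner d (c • f) g = c * wInner d f g := by
  simp only [wInner, Pi.smul_apply, real_inner_smul_left, mul_sum]
  exact sum_congr rfl fun s _ => by ring

lemma wInner_add_self_add_wInner_sub_self (d : V → ℝ) (f g : V → E) :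
    wInner d (f + g) (f + g) + wInner d (f - g) (f - g) = 2 * wInner d f f + 2 * wInner d g g := by
  simp only [wInner, mul_sum, ← sum_add_distrib]
  refine sum_congr rfl fun s _ => ?_
  simp only [Pi.add_apply, Pi.sub_apply, inner_add_left, inner_add_right, inner_sub_left,
    inner_sub_right]
  ring

lemma wInner_add_const_self (d : V → ℝ) {f : V → E} (hf : f ∈ meanZero d) (c : E) :
    wInner d (f + fun _ => c) (f + fun _ => c) = wInner d f f + (∑ s, d s) * ‖c‖ ^ 2 := by
  have hf' : ∑ s, d s • f s = 0 := hf
  have h : ∀ s, d s * ⟪f s + c, f s + c⟫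
      = d s * ⟪f s, f s⟫ + 2 * ⟪d s • f s, c⟫ + d s * ‖c‖ ^ 2 := by
    intro s
    rw [real_inner_smul_left, inner_add_left, inner_add_right, inner_add_right,
      real_inner_comm (f s) c, real_inner_self_eq_norm_sq c]
    ring
  simp only [wInner, Pi.add_apply, h, sum_add_distrib, ← mul_sum, ← sum_inner, hf',
    inner_zero_left, ← sum_mul]
  ring

lemma wInner_add (d₁ d₂ : V → ℝ) (f g : V → E) :
    wInner (d₁ + d₂) f g = wInner d₁ f g + wInner d₂ f g := by
  simp only [wInner, Pi.add_apply, add_mul, sum_add_distrib]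

lemma sq_wInner_le {d : V → ℝ} (hd : ∀ s, 0 ≤ d s) (f g : V → E) :
    wInner d f g ^ 2 ≤ wInner d f f * wInner d g g := by
  have h : |wInner d f g| ≤ ∑ s, d s * (‖f s‖ * ‖g s‖) :=
    (abs_sum_le_sum_abs _ _).trans <| sum_le_sum fun s _ => by
      rw [abs_mul, abs_of_nonneg (hd s)]
      exact mul_le_mul_of_nonneg_left (abs_real_inner_le_norm _ _) (hd s)
  rw [wInner_self, wInner_self, ← sq_abs]
  refine (pow_le_pow_left₀ (abs_nonneg _) h 2).trans ?_
  refine sum_sq_le_sum_mul_sum_of_sq_le_mul _ (fun s _ => mul_nonneg (hd s) (sq_nonneg _))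
    (fun s _ => mul_nonneg (hd s) (sq_nonneg _)) fun s _ => le_of_eq (by ring)

lemma abs_wInner_le {d : V → ℝ} (hd : ∀ s, 0 ≤ d s) (f g : V → E) :
    |wInner d f g| ≤ √(wInner d f f) * √(wInner d g g) := by
  rw [← Real.sqrt_mul (wInner_self_nonneg hd f)]
  exact Real.abs_le_sqrt (sq_wInner_le hd f g)

lemma sq_norm_sum_smul_le {d : V → ℝ} (hd : ∀ s, 0 < d s) (k : V → ℝ) (f : V → E) :
    ‖∑ s, k s • f s‖ ^ 2 ≤ (∑ s, k s ^ 2 / d s) * ∑ s, d s * ‖f s‖ ^ 2 := by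
  have h : ‖∑ s, k s • f s‖ ≤ ∑ s, |k s| * ‖f s‖ :=
    (norm_sum_le _ _).trans_eq <| sum_congr rfl fun s _ => by rw [norm_smul, Real.norm_eq_abs]
  refine (pow_le_pow_left₀ (norm_nonneg _) h 2).trans ?_
  refine sum_sq_le_sum_mul_sum_of_sq_le_mul _ (fun s _ => div_nonneg (sq_nonneg _) (hd s).le)
    (fun s _ => mul_nonneg (hd s).le (sq_nonneg _)) fun s _ => le_of_eq ?_
  field_simp [(hd s).ne']
  rw [sq_abs]; ring

lemma sq_norm_sum_smul_div_add_le [Nonempty V] {d₁ d₂ : V → ℝ} (hd₁ : ∀ s, 0 < d₁ s)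
    (hd₂ : ∀ s, 0 < d₂ s) {g : V → E} (hg : g ∈ meanZero (d₁ + d₂)) :
    ‖∑ s, d₁ s • g s‖ ^ 2 / ∑ s, d₁ s + ‖∑ s, d₂ s • g s‖ ^ 2 / ∑ s, d₂ s
      ≤ (∑ s, |d₁ s / ∑ t, d₁ t - d₂ s / ∑ t, d₂ t|) * wInner (d₁ + d₂) g g := by
  set D₁ := ∑ s, d₁ s
  set D₂ := ∑ s, d₂ s
  set z := ∑ s, d₁ s • g s
  have hD₁ : 0 < D₁ := sum_pos (fun s _ => hd₁ s) univ_nonempty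
  have hD₂ : 0 < D₂ := sum_pos (fun s _ => hd₂ s) univ_nonempty
  have hd : ∀ s, 0 < (d₁ + d₂) s := fun s => add_pos (hd₁ s) (hd₂ s)
  set c := D₁ * D₂ / (D₁ + D₂)
  set w : V → ℝ := fun s => d₁ s / D₁ - d₂ s / D₂
  have hz₂ : ∑ s, d₂ s • g s = -z := by
    have hg' : ∑ s, (d₁ s + d₂ s) • g s = 0 := hg
    simp only [add_smul, sum_add_distrib] at hg'
    exact eq_neg_of_add_eq_zero_right hg'
  have hzw : z = ∑ s, (c * w s) • g s := by
    have hsplit : ∀ s, (c * w s) • g s = (c / D₁) • (d₁ s • g s) - (c / D₂) • (d₂ s • g s) := by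
      intro s
      simp only [smul_smul, ← sub_smul, w]
      congr 1
      ring
    have hc : c / D₁ + c / D₂ = 1 := by
      simp only [c]
      field_simp
      ring
    rw [sum_congr rfl fun s _ => hsplit s, sum_sub_distrib, ← smul_sum, ← smul_sum, hz₂, smul_neg,
      sub_neg_eq_add, ← add_smul, hc, one_smul]
  have hpt : ∀ s, (c * w s) ^ 2 / (d₁ + d₂) s * (1 / D₁ + 1 / D₂) ≤ |w s| := fun s =>
    sq_mul_div_mul_le_abs (hd₁ s) (hd₂ s) hD₁ hD₂
  have hN : 0 ≤ ∑ s, (d₁ + d₂) s * ‖g s‖ ^ 2 :=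
    sum_nonneg fun s _ => mul_nonneg (hd s).le (sq_nonneg _)
  rw [hz₂, norm_neg, show ‖z‖ ^ 2 / D₁ + ‖z‖ ^ 2 / D₂ = ‖z‖ ^ 2 * (1 / D₁ + 1 / D₂) by ring]
  calc ‖z‖ ^ 2 * (1 / D₁ + 1 / D₂)
      ≤ (∑ s, (c * w s) ^ 2 / (d₁ + d₂) s) * (∑ s, (d₁ + d₂) s * ‖g s‖ ^ 2)
          * (1 / D₁ + 1 / D₂) := by
        rw [hzw]
        gcongr
        exact sq_norm_sum_smul_le hd _ g
    _ = (∑ s, (c * w s) ^ 2 / (d₁ + d₂) s * (1 / D₁ + 1 / D₂))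
          * ∑ s, (d₁ + d₂) s * ‖g s‖ ^ 2 := by
        rw [← sum_mul]; ring
    _ ≤ (∑ s, |w s|) * wInner (d₁ + d₂) g g := by
        rw [wInner_self]
        gcongr with s
        exact hpt s

def edgeForm (ω : V → V → ℝ) (f g : V → E) : ℝ := ∑ s, ∑ t, ω s t * ⟪f t, g s⟫

variable {ω : V → V → ℝ}

lemma wdeg_add (ω₁ ω₂ : V → V → ℝ) : wdeg (ω₁ + ω₂) = wdeg ω₁ + wdeg ω₂ :=
  funext fun _ => sum_add_distrib

lemma edgeForm_add (ω₁ ω₂ : V → V → ℝ) (f g : V → E) :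
    edgeForm (ω₁ + ω₂) f g = edgeForm ω₁ f g + edgeForm ω₂ f g := by
  simp only [edgeForm, Pi.add_apply, add_mul, sum_add_distrib]

lemma wInner_markovW (hd : ∀ s, wdeg ω s ≠ 0) (f g : V → E) :
    wInner (wdeg ω) (markovW ω f) g = edgeForm ω f g := by
  refine sum_congr rfl fun s _ => ?_
  simp only [markovW, real_inner_smul_left, sum_inner, ← mul_assoc, mul_inv_cancel₀ (hd s),
    one_mul]

lemma edgeForm_comm (hs : SymmW ω) (f g : V → E) : edgeForm ω f g = edgeForm ω g f := by
  rw [edgeForm, sum_comm]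
  exact sum_congr rfl fun s _ => sum_congr rfl fun t _ => by rw [hs, real_inner_comm]

lemma edgeForm_add_left (f f' g : V → E) :
    edgeForm ω (f + f') g = edgeForm ω f g + edgeForm ω f' g := by
  simp only [edgeForm, Pi.add_apply, inner_add_left, mul_add, sum_add_distrib]

lemma edgeForm_add_right (f g g' : V → E) :
    edgeForm ω f (g + g') = edgeForm ω f g + edgeForm ω f g' := by
  simp only [edgeForm, Pi.add_apply, inner_add_right, mul_add, sum_add_distrib]

lemma edgeForm_sub_left (f f' g : V → E) :
    edgeForm ω (f - f') g = edgeForm ω f g - edgeForm ω f' g := by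
  simp only [edgeForm, Pi.sub_apply, inner_sub_left, mul_sub, sum_sub_distrib]

lemma edgeForm_sub_right (f g g' : V → E) :
    edgeForm ω f (g - g') = edgeForm ω f g - edgeForm ω f g' := by
  simp only [edgeForm, Pi.sub_apply, inner_sub_right, mul_sub, sum_sub_distrib]

lemma edgeForm_add_self_sub_edgeForm_sub_self (hs : SymmW ω) (f g : V → E) :
    edgeForm ω (f + g) (f + g) - edgeForm ω (f - g) (f - g) = 4 * edgeForm ω f g := by
  simp only [edgeForm_add_left, edgeForm_add_right, edgeForm_sub_left, edgeForm_sub_right,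
    edgeForm_comm hs g f]
  ring

lemma edgeForm_const_right (hs : SymmW ω) (f : V → E) (c : E) :
    edgeForm ω f (fun _ => c) = ⟪∑ t, wdeg ω t • f t, c⟫ := by
  rw [edgeForm, sum_comm, sum_inner]
  refine sum_congr rfl fun t _ => ?_
  rw [real_inner_smul_left, ← sum_mul, wdeg]
  simp only [hs t]

lemma edgeForm_add_const_self (hs : SymmW ω) {f : V → E} (hf : f ∈ meanZero (wdeg ω)) (c : E) :
    edgeForm ω (f + fun _ => c) (f + fun _ => c) = edgeForm ω f f + (∑ s, wdeg ω s) * ‖c‖ ^ 2 := by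
  have hf' : ∑ s, wdeg ω s • f s = 0 := hf
  rw [edgeForm_add_left, edgeForm_add_right, edgeForm_add_right, edgeForm_comm hs (fun _ => c),
    edgeForm_const_right hs, edgeForm_const_right hs, hf', inner_zero_left, ← sum_smul,
    real_inner_smul_left, real_inner_self_eq_norm_sq]
  ring

lemma abs_edgeForm_self_le (hs : SymmW ω) (hn : NonnegW ω) (f : V → E) :
    |edgeForm ω f f| ≤ wInner (wdeg ω) f f := by
  have hedge : ∀ s t, |ω s t * ⟪f t, f s⟫| ≤ ω s t * ‖f s‖ ^ 2 / 2 + ω s t * ‖f t‖ ^ 2 / 2 := by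
    intro s t
    rw [abs_mul, abs_of_nonneg (hn s t)]
    nlinarith [abs_real_inner_le_norm (f t) (f s), two_mul_le_add_sq ‖f t‖ ‖f s‖, hn s t]
  have hsum : ∑ s, ∑ t, ω s t * ‖f t‖ ^ 2 = ∑ s, ∑ t, ω s t * ‖f s‖ ^ 2 := by
    rw [sum_comm]
    exact sum_congr rfl fun s _ => sum_congr rfl fun t _ => by rw [hs]
  calc |edgeForm ω f f|
      ≤ ∑ s, ∑ t, (ω s t * ‖f s‖ ^ 2 / 2 + ω s t * ‖f t‖ ^ 2 / 2) :=
        (abs_sum_le_sum_abs _ _).trans <| sum_le_sum fun s _ =>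
          (abs_sum_le_sum_abs _ _).trans <| sum_le_sum fun t _ => hedge s t
    _ = wInner (wdeg ω) f f := by
        simp only [sum_add_distrib, ← sum_div, hsum, wInner_self, wdeg, sum_mul]
        ring

lemma sum_wdeg_smul_markovW (hd : ∀ s, wdeg ω s ≠ 0) (hs : SymmW ω) (f : V → E) :
    ∑ s, wdeg ω s • markovW ω f s = ∑ s, wdeg ω s • f s := by
  simp only [markovW, smul_smul, mul_inv_cancel₀ (hd _), one_smul]
  rw [sum_comm]
  refine sum_congr rfl fun t _ => ?_
  rw [wdeg, sum_smul]
  simp only [hs t]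

lemma markovW_mem_meanZero (hd : ∀ s, wdeg ω s ≠ 0) (hs : SymmW ω) {f : V → E}
    (hf : f ∈ meanZero (wdeg ω)) : markovW ω f ∈ meanZero (wdeg ω) :=
  (sum_wdeg_smul_markovW hd hs f).trans hf

lemma wInner_markovW_self_le_of_abs_edgeForm_le (hd : ∀ s, wdeg ω s ≠ 0) (hs : SymmW ω)
    {K : Submodule ℝ (V → E)} (hK : ∀ f ∈ K, markovW ω f ∈ K) {C : ℝ} (hC : 0 ≤ C)
    (h : ∀ f ∈ K, |edgeForm ω f f| ≤ C * wInner (wdeg ω) f f) {f : V → E} (hf : f ∈ K) :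
    wInner (wdeg ω) (markovW ω f) (markovW ω f) ≤ C ^ 2 * wInner (wdeg ω) f f := by
  -- polarization against `t • A f`: `4 t ‖A f‖² = Q(f + t • A f) - Q(f - t • A f)`
  refine le_sq_mul_of_forall_two_mul_le hC fun t => ?_
  set a := markovW ω f
  have hg : t • a ∈ K := K.smul_mem t (hK f hf)
  have polar : edgeForm ω (f + t • a) (f + t • a) - edgeForm ω (f - t • a) (f - t • a)
      = 4 * (t * wInner (wdeg ω) a a) := by
    rw [edgeForm_add_self_sub_edgeForm_sub_self hs, ← wInner_markovW hd, wInner_smul_right]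
  have par := wInner_add_self_add_wInner_sub_self (wdeg ω) f (t • a)
  rw [wInner_smul_left, wInner_smul_right] at par
  have hadd := h _ (K.add_mem hf hg)
  have hsub := h _ (K.sub_mem hf hg)
  nlinarith [le_abs_self (edgeForm ω (f + t • a) (f + t • a)),
    neg_abs_le (edgeForm ω (f - t • a) (f - t • a))]

end WeightedL2

section OpNorm

variable [Fintype V] {ω ω₁ ω₂ : V → V → ℝ}

lemma l2d_eq_sqrt_wInner (f : V → ℂ) : l2d ω f = √(wInner (wdeg ω) f f) := by
  rw [l2d, wInner_self]

lemma mem_meanZero_iff (d : V → ℝ) (f : V → ℂ) :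
    f ∈ meanZero d ↔ ∑ s, (d s : ℂ) * f s = 0 := by
  simp only [← Complex.real_smul]
  rfl

lemma l2d_markovW_le_of_abs_edgeForm_le (hd : ∀ s, 0 < wdeg ω s) (hs : SymmW ω)
    {K : Submodule ℝ (V → ℂ)} (hK : ∀ f ∈ K, markovW ω f ∈ K) {C : ℝ} (hC : 0 ≤ C)
    (h : ∀ f ∈ K, |edgeForm ω f f| ≤ C * wInner (wdeg ω) f f) {f : V → ℂ} (hf : f ∈ K) :
    l2d ω (markovW ω f) ≤ C * l2d ω f := by
  rw [l2d_eq_sqrt_wInner, l2d_eq_sqrt_wInner, ← Real.sqrt_sq hC,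
    ← Real.sqrt_mul (sq_nonneg C)]
  exact Real.sqrt_le_sqrt
    (wInner_markovW_self_le_of_abs_edgeForm_le (fun s => (hd s).ne') hs hK hC h hf)

lemma l2d_markovW_le (hd : ∀ s, 0 < wdeg ω s) (hs : SymmW ω) (hn : NonnegW ω) (f : V → ℂ) :
    l2d ω (markovW ω f) ≤ l2d ω f := by
  simpa using l2d_markovW_le_of_abs_edgeForm_le (K := ⊤) hd hs (fun _ _ => trivial) zero_le_one
    (fun f _ => by simpa using abs_edgeForm_self_le hs hn f) (Submodule.mem_top (x := f))

lemma opA0_le_of_forall {C : ℝ} (hC : 0 ≤ C)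
    (h : ∀ f ∈ meanZero (wdeg ω), l2d ω (markovW ω f) ≤ C * l2d ω f) : opA0 ω ≤ C :=
  csInf_le ⟨0, fun _ hK => hK.1⟩ ⟨hC, fun f hf => h f ((mem_meanZero_iff _ f).2 hf)⟩

lemma opA0_le_one (hd : ∀ s, 0 < wdeg ω s) (hs : SymmW ω) (hn : NonnegW ω) : opA0 ω ≤ 1 :=
  opA0_le_of_forall zero_le_one fun f _ => by simpa using l2d_markovW_le hd hs hn f

lemma opA0_nonneg : 0 ≤ opA0 ω :=
  Real.sInf_nonneg fun _ hK => hK.1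

lemma l2d_markovW_le_opA0_mul (hd : ∀ s, 0 < wdeg ω s) (hs : SymmW ω) (hn : NonnegW ω)
    {f : V → ℂ} (hf : f ∈ meanZero (wdeg ω)) : l2d ω (markovW ω f) ≤ opA0 ω * l2d ω f := by
  have hne : Set.Nonempty {K : ℝ | 0 ≤ K ∧ ∀ f : V → ℂ, (∑ s, (wdeg ω s : ℂ) * f s) = 0 →
      l2d ω (markovW ω f) ≤ K * l2d ω f} :=
    ⟨1, zero_le_one, fun f _ => by simpa using l2d_markovW_le hd hs hn f⟩
  have hL : 0 ≤ l2d ω f := Real.sqrt_nonneg _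
  rcases hL.eq_or_lt with h0 | hpos
  · have h := l2d_markovW_le hd hs hn f
    rw [← h0] at h ⊢
    rwa [mul_zero]
  · rw [← div_le_iff₀ hpos]
    exact le_csInf hne fun K hK => (div_le_iff₀ hpos).2 (hK.2 f ((mem_meanZero_iff _ f).1 hf))

lemma abs_edgeForm_self_le_of_opA0_le [Nonempty V] (hd : ∀ s, 0 < wdeg ω s) (hs : SymmW ω)
    (hn : NonnegW ω) {M : ℝ} (hM : opA0 ω ≤ M) (f : V → ℂ) :
    |edgeForm ω f f| ≤ M * wInner (wdeg ω) f f
      + (1 - M) * (‖∑ s, wdeg ω s • f s‖ ^ 2 / ∑ s, wdeg ω s) := by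
  set D := ∑ s, wdeg ω s
  set z := ∑ s, wdeg ω s • f s
  have hD : 0 < D := sum_pos (fun s _ => hd s) univ_nonempty
  set g : V → ℂ := f - fun _ => D⁻¹ • z
  have hg : g ∈ meanZero (wdeg ω) := by
    change ∑ s, wdeg ω s • (f s - D⁻¹ • z) = 0
    simp only [smul_sub, sum_sub_distrib]
    rw [← sum_smul, smul_smul, mul_inv_cancel₀ hD.ne', one_smul, sub_self]
  have hfg : f = g + fun _ => D⁻¹ • z := (sub_add_cancel _ _).symm
  have hQg : |edgeForm ω g g| ≤ M * wInner (wdeg ω) g g := calc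
    |edgeForm ω g g| = |wInner (wdeg ω) (markovW ω g) g| := by
        rw [wInner_markovW fun s => (hd s).ne']
    _ ≤ l2d ω (markovW ω g) * l2d ω g := by
        simpa only [l2d_eq_sqrt_wInner] using abs_wInner_le (fun s => (hd s).le) _ _
    _ ≤ M * l2d ω g * l2d ω g := by
        gcongr
        · exact Real.sqrt_nonneg _
        · exact (l2d_markovW_le_opA0_mul hd hs hn hg).trans
            (mul_le_mul_of_nonneg_right hM (Real.sqrt_nonneg _))
    _ = M * wInner (wdeg ω) g g := by
        rw [mul_assoc, l2d_eq_sqrt_wInner,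
          Real.mul_self_sqrt (wInner_self_nonneg (fun s => (hd s).le) g)]
  have hc : D * ‖D⁻¹ • z‖ ^ 2 = ‖z‖ ^ 2 / D := by
    rw [norm_smul, Real.norm_eq_abs, abs_inv, abs_of_pos hD]
    field_simp
  rw [hfg, edgeForm_add_const_self hs hg, wInner_add_const_self _ hg, hc]
  calc |edgeForm ω g g + ‖z‖ ^ 2 / D| ≤ |edgeForm ω g g| + ‖z‖ ^ 2 / D :=
        (abs_add_le _ _).trans_eq (by rw [abs_of_nonneg (div_nonneg (sq_nonneg _) hD.le)])
    _ ≤ M * (wInner (wdeg ω) g g + ‖z‖ ^ 2 / D) + (1 - M) * (‖z‖ ^ 2 / D) := by linarith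

lemma abs_edgeForm_add_self_le [Nonempty V] (hs₁ : SymmW ω₁) (hs₂ : SymmW ω₂)
    (hn₁ : NonnegW ω₁) (hn₂ : NonnegW ω₂) (hd₁ : ∀ s, 0 < wdeg ω₁ s) (hd₂ : ∀ s, 0 < wdeg ω₂ s)
    {M : ℝ} (hM₁ : opA0 ω₁ ≤ M) (hM₂ : opA0 ω₂ ≤ M) (hM : M ≤ 1)
    {g : V → ℂ} (hg : g ∈ meanZero (wdeg (ω₁ + ω₂))) :
    |edgeForm (ω₁ + ω₂) g g|
      ≤ (M + (∑ s, |nu ω₁ s - nu ω₂ s|) * (1 - M)) * wInner (wdeg (ω₁ + ω₂)) g g := by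
  rw [wdeg_add] at hg ⊢
  have hq₁ := abs_edgeForm_self_le_of_opA0_le hd₁ hs₁ hn₁ hM₁ g
  have hq₂ := abs_edgeForm_self_le_of_opA0_le hd₂ hs₂ hn₂ hM₂ g
  have hX := mul_le_mul_of_nonneg_left (sq_norm_sum_smul_div_add_le hd₁ hd₂ hg) (sub_nonneg.2 hM)
  rw [wInner_add] at hX
  rw [edgeForm_add, wInner_add]
  calc |edgeForm ω₁ g g + edgeForm ω₂ g g| ≤ |edgeForm ω₁ g g| + |edgeForm ω₂ g g| :=
        abs_add_le _ _
    _ ≤ _ := by simp only [nu]; linarith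

theorem opA0_add_le [Nonempty V] (hs₁ : SymmW ω₁) (hs₂ : SymmW ω₂)
    (hn₁ : NonnegW ω₁) (hn₂ : NonnegW ω₂) (hd₁ : ∀ s, 0 < wdeg ω₁ s) (hd₂ : ∀ s, 0 < wdeg ω₂ s)
    {M : ℝ} (hM₁ : opA0 ω₁ ≤ M) (hM₂ : opA0 ω₂ ≤ M) (hM : M ≤ 1) :
    opA0 (ω₁ + ω₂) ≤ M + (∑ s, |nu ω₁ s - nu ω₂ s|) * (1 - M) := by
  have hd : ∀ s, 0 < wdeg (ω₁ + ω₂) s := fun s => by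
    rw [wdeg_add]; exact add_pos (hd₁ s) (hd₂ s)
  have hs : SymmW (ω₁ + ω₂) := fun s t => by simp only [Pi.add_apply, hs₁ s t, hs₂ s t]
  have hC : 0 ≤ M + (∑ s, |nu ω₁ s - nu ω₂ s|) * (1 - M) :=
    add_nonneg (opA0_nonneg.trans hM₁)
      (mul_nonneg (sum_nonneg fun _ _ => abs_nonneg _) (sub_nonneg.2 hM))
  exact opA0_le_of_forall hC fun f hf =>
    l2d_markovW_le_of_abs_edgeForm_le hd hs
      (fun _ => markovW_mem_meanZero (fun s => (hd s).ne') hs) hC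
      (fun _ => abs_edgeForm_add_self_le hs₁ hs₂ hn₁ hn₂ hd₁ hd₂ hM₁ hM₂ hM) hf

end OpNorm

/-- spectral gap of the union of two graphs with `L¹`-concentrated degrees:
`‖A⁰_{ω₁+ω₂}‖ ≤ δ + (1−δ) max(‖A⁰_{ω₁}‖, ‖A⁰_{ω₂}‖)`. -/
theorem stmt17 {V : Type*} [Fintype V] [Nonempty V]
    (ω₁ ω₂ : V → V → ℝ) (hs1 : SymmW ω₁) (hs2 : SymmW ω₂)
    (hn1 : NonnegW ω₁) (hn2 : NonnegW ω₂)
    (hd1 : ∀ s, 0 < wdeg ω₁ s) (hd2 : ∀ s, 0 < wdeg ω₂ s)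
    (D₁ D₂ δ : ℝ)
    (hD₁ : D₁ = ∑ s, wdeg ω₁ s) (hD₂ : D₂ = ∑ s, wdeg ω₂ s)
    (hδ : δ = ∑ s, (|wdeg ω₁ s - D₁ / (Fintype.card V : ℝ)| / D₁ +
                    |wdeg ω₂ s - D₂ / (Fintype.card V : ℝ)| / D₂)) :
    opA0 (fun s t => ω₁ s t + ω₂ s t) ≤ δ + (1 - δ) * max (opA0 ω₁) (opA0 ω₂) := by
  set M := max (opA0 ω₁) (opA0 ω₂)
  have hM : M ≤ 1 := max_le (opA0_le_one hd1 hs1 hn1) (opA0_le_one hd2 hs2 hn2)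
  have hδ' : ∑ s, |nu ω₁ s - nu ω₂ s| ≤ δ := by
    subst hD₁ hD₂ hδ
    exact sum_le_sum fun s _ => abs_div_sub_div_le _ _ _ _ _
      (sum_pos (fun s _ => hd1 s) univ_nonempty) (sum_pos (fun s _ => hd2 s) univ_nonempty)
  calc opA0 (ω₁ + ω₂) ≤ M + (∑ s, |nu ω₁ s - nu ω₂ s|) * (1 - M) :=
        opA0_add_le hs1 hs2 hn1 hn2 hd1 hd2 (le_max_left _ _) (le_max_right _ _) hM
    _ ≤ M + δ * (1 - M) := by gcongr
    _ = δ + (1 - δ) * M := by ring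
end
end

section
/- Let V be a finite set with n = |V| ≥ 1, and let ω₁, ω₂ : V×V → ℝ≥0 be symmetric weight functions with all degrees positive. Let D_i = ∑_{s∈V} d_{ω_i}(s) and δ = ∑_{s∈V} ( |d_{ω₁}(s) − D₁/n| / D₁ + |d_{ω₂}(s) − D₂/n| / D₂ ). Let f : V → ℂ satisfy ∑_s (d_{ω₁}(s)+d_{ω₂}(s)) f(s) = 0 and ∑_s (d_{ω₁}(s)+d_{ω₂}(s)) |f(s)|² = 1, and set c₁ = D₁^{-1} ∑_s d_{ω₁}(s) f(s) (the value of the orthogonal projection of f onto the constant functions in L²(V, d_{ω₁})). Then D₁ |c₁|² ≤ δ · D₂ / (D₁ + D₂). -/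
open scoped BigOperators
open Finset MeasureTheory

noncomputable section

variable {V : Type*}

/-!
Since `f` has mean zero for `d₁ + d₂`, subtracting `D₁ / (D₁ + D₂)` times that mean from
`∑ d₁ f = D₁ c₁` gives `D₁ c₁ = ∑ B f` with `B = (D₂ d₁ - D₁ d₂) / (D₁ + D₂)`. Weighted
Cauchy–Schwarz against the unit norm of `f` bounds `D₁² |c₁|²` by `∑ B² / (d₁ + d₂)`. At each
vertex `|B| ≤ d₁ + d₂`, while writing `D₂ d₁ - D₁ d₂ = D₂ (d₁ - D₁/n) - D₁ (d₂ - D₂/n)` shows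
`|B| ≤ D₁ D₂ δ_s / (D₁ + D₂)`, where `δ_s` is the summand of `δ`; hence `B² / (d₁ + d₂)` is at
most the latter, and summing gives `D₁² |c₁|² ≤ D₁ D₂ δ / (D₁ + D₂)`.
-/

theorem sq_div_le_of_abs_le {x u v : ℝ} (hu : |x| ≤ u) (hv : |x| ≤ v) (hv₀ : 0 < v) :
    x ^ 2 / v ≤ u := by
  rw [div_le_iff₀ hv₀, ← sq_abs, sq]
  exact mul_le_mul hu hv (abs_nonneg x) ((abs_nonneg x).trans hu)

theorem abs_mul_sub_mul_div_le_add {D₁ D₂ a₁ a₂ : ℝ} (hD₁ : 0 < D₁) (hD₂ : 0 < D₂)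
    (ha₁ : 0 ≤ a₁) (ha₂ : 0 ≤ a₂) :
    |(D₂ * a₁ - D₁ * a₂) / (D₁ + D₂)| ≤ a₁ + a₂ := by
  rw [abs_div, abs_of_pos (add_pos hD₁ hD₂), div_le_iff₀ (add_pos hD₁ hD₂), abs_le]
  constructor <;> nlinarith

theorem abs_mul_sub_mul_div_le_deviation {D₁ D₂ : ℝ} (hD₁ : 0 < D₁) (hD₂ : 0 < D₂)
    (a₁ a₂ n : ℝ) :
    |(D₂ * a₁ - D₁ * a₂) / (D₁ + D₂)| ≤
      D₁ * D₂ / (D₁ + D₂) * (|a₁ - D₁ / n| / D₁ + |a₂ - D₂ / n| / D₂) := by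
  have hsplit : D₂ * a₁ - D₁ * a₂ = D₂ * (a₁ - D₁ / n) - D₁ * (a₂ - D₂ / n) := by ring
  have hdev : D₁ * D₂ * (|a₁ - D₁ / n| / D₁ + |a₂ - D₂ / n| / D₂) =
      D₂ * |a₁ - D₁ / n| + D₁ * |a₂ - D₂ / n| := by
    field_simp
  rw [abs_div, abs_of_pos (add_pos hD₁ hD₂), div_mul_eq_mul_div, hdev]
  gcongr
  calc |D₂ * a₁ - D₁ * a₂|
      ≤ |D₂ * (a₁ - D₁ / n)| + |D₁ * (a₂ - D₂ / n)| := hsplit ▸ abs_sub _ _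
    _ = D₂ * |a₁ - D₁ / n| + D₁ * |a₂ - D₂ / n| := by
      rw [abs_mul, abs_mul, abs_of_pos hD₁, abs_of_pos hD₂]

variable [Fintype V]

theorem norm_sum_mul_sq_le_sum_sq_div_mul_sum_mul_sq (b g : V → ℝ) (hg : ∀ s, 0 < g s)
    (f : V → ℂ) :
    ‖∑ s, (b s : ℂ) * f s‖ ^ 2 ≤ (∑ s, b s ^ 2 / g s) * ∑ s, g s * ‖f s‖ ^ 2 := by
  have hterm : ∀ s, ‖(b s : ℂ) * f s‖ = |b s| * ‖f s‖ := fun s => by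
    rw [norm_mul, Complex.norm_real, Real.norm_eq_abs]
  calc ‖∑ s, (b s : ℂ) * f s‖ ^ 2 ≤ (∑ s, |b s| * ‖f s‖) ^ 2 := by
        gcongr
        exact (norm_sum_le _ _).trans_eq (sum_congr rfl fun s _ => hterm s)
    _ ≤ (∑ s, b s ^ 2 / g s) * ∑ s, g s * ‖f s‖ ^ 2 := by
        refine sum_sq_le_sum_mul_sum_of_sq_le_mul _
          (fun s _ => div_nonneg (sq_nonneg _) (hg s).le)
          (fun s _ => mul_nonneg (hg s).le (sq_nonneg _)) fun s _ => le_of_eq ?_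
        rw [mul_pow, sq_abs]
        field_simp [(hg s).ne']

theorem sum_mul_eq_sum_balance_mul_of_sum_add_mul_eq_zero (d₁ d₂ : V → ℝ)
    (hD : ∑ s, d₁ s + ∑ s, d₂ s ≠ 0) (f : V → ℂ)
    (hmean : ∑ s, ((d₁ s + d₂ s : ℝ) : ℂ) * f s = 0) :
    ∑ s, (d₁ s : ℂ) * f s =
      ∑ s, (((∑ t, d₂ t) * d₁ s - (∑ t, d₁ t) * d₂ s) / (∑ t, d₁ t + ∑ t, d₂ t) : ℝ) * f s := by
  set D₁ := ∑ t, d₁ t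
  set D₂ := ∑ t, d₂ t
  have hbalance : ∀ s, (((D₂ * d₁ s - D₁ * d₂ s) / (D₁ + D₂) : ℝ) : ℂ) =
      d₁ s - ((D₁ / (D₁ + D₂) : ℝ) : ℂ) * ((d₁ s + d₂ s : ℝ) : ℂ) := fun s => by
    push_cast
    field_simp [show (D₁ : ℂ) + D₂ ≠ 0 by exact_mod_cast hD]
    ring
  simp_rw [hbalance, sub_mul, sum_sub_distrib, mul_assoc, ← mul_sum, hmean, mul_zero, sub_zero]

theorem norm_sum_mul_sq_le_of_sum_add_mul_eq_zero [Nonempty V] (d₁ d₂ : V → ℝ)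
    (hd₁ : ∀ s, 0 < d₁ s) (hd₂ : ∀ s, 0 < d₂ s) (n : ℝ) (f : V → ℂ)
    (hmean : ∑ s, ((d₁ s + d₂ s : ℝ) : ℂ) * f s = 0) :
    ‖∑ s, (d₁ s : ℂ) * f s‖ ^ 2 ≤
      (∑ s, d₁ s) * (∑ s, d₂ s) / (∑ s, d₁ s + ∑ s, d₂ s) *
        (∑ s, (|d₁ s - (∑ t, d₁ t) / n| / ∑ t, d₁ t + |d₂ s - (∑ t, d₂ t) / n| / ∑ t, d₂ t)) *
        ∑ s, (d₁ s + d₂ s) * ‖f s‖ ^ 2 := by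
  have hD₁ : 0 < ∑ t, d₁ t := sum_pos (fun s _ => hd₁ s) univ_nonempty
  have hD₂ : 0 < ∑ t, d₂ t := sum_pos (fun s _ => hd₂ s) univ_nonempty
  set D₁ := ∑ t, d₁ t
  set D₂ := ∑ t, d₂ t
  rw [sum_mul_eq_sum_balance_mul_of_sum_add_mul_eq_zero d₁ d₂ (add_pos hD₁ hD₂).ne' f hmean,
    mul_sum univ _ (D₁ * D₂ / (D₁ + D₂))]
  refine (norm_sum_mul_sq_le_sum_sq_div_mul_sum_mul_sq _ _
    (fun s => add_pos (hd₁ s) (hd₂ s)) f).trans ?_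
  refine mul_le_mul_of_nonneg_right (sum_le_sum fun s _ => ?_)
    (sum_nonneg fun s _ => mul_nonneg (add_pos (hd₁ s) (hd₂ s)).le (sq_nonneg _))
  exact sq_div_le_of_abs_le (abs_mul_sub_mul_div_le_deviation hD₁ hD₂ _ _ n)
    (abs_mul_sub_mul_div_le_add hD₁ hD₂ (hd₁ s).le (hd₂ s).le) (add_pos (hd₁ s) (hd₂ s))

theorem stmt18_general {V : Type*} [Fintype V] [Nonempty V]
    (ω₁ ω₂ : V → V → ℝ)
    (hd1 : ∀ s, 0 < wdeg ω₁ s) (hd2 : ∀ s, 0 < wdeg ω₂ s)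
    (D₁ D₂ δ : ℝ)
    (hD₁ : D₁ = ∑ s, wdeg ω₁ s) (hD₂ : D₂ = ∑ s, wdeg ω₂ s)
    (hδ : δ = ∑ s, (|wdeg ω₁ s - D₁ / (Fintype.card V : ℝ)| / D₁ +
                    |wdeg ω₂ s - D₂ / (Fintype.card V : ℝ)| / D₂))
    (f : V → ℂ)
    (hmean : (∑ s, ((wdeg ω₁ s + wdeg ω₂ s : ℝ) : ℂ) * f s) = 0)
    (hnorm : (∑ s, (wdeg ω₁ s + wdeg ω₂ s) * ‖f s‖ ^ 2) = 1)
    (c₁ : ℂ) (hc₁ : c₁ = (D₁ : ℂ)⁻¹ * ∑ s, (wdeg ω₁ s : ℂ) * f s) :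
    D₁ * ‖c₁‖ ^ 2 ≤ δ * D₂ / (D₁ + D₂) := by
  have hD₁pos : 0 < D₁ := hD₁ ▸ sum_pos (fun s _ => hd1 s) univ_nonempty
  have hsum : ∑ s, (wdeg ω₁ s : ℂ) * f s = (D₁ : ℂ) * c₁ := by
    rw [hc₁, mul_inv_cancel_left₀ (by exact_mod_cast hD₁pos.ne')]
  have hbound := norm_sum_mul_sq_le_of_sum_add_mul_eq_zero _ _ hd1 hd2 (Fintype.card V) f hmean
  rw [hsum, ← hD₁, ← hD₂, ← hδ, hnorm, norm_mul, Complex.norm_real, Real.norm_of_nonneg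
    hD₁pos.le] at hbound
  refine le_of_mul_le_mul_left ?_ hD₁pos
  calc D₁ * (D₁ * ‖c₁‖ ^ 2) = (D₁ * ‖c₁‖) ^ 2 := by ring
    _ ≤ D₁ * D₂ / (D₁ + D₂) * δ * 1 := hbound
    _ = D₁ * (δ * D₂ / (D₁ + D₂)) := by ring

/-- key estimate in the proof of the spectral gap for unions of graphs. If `f`
has zero mean and unit norm in `L²(V, d_{ω₁}+d_{ω₂})`, and `c₁` is the value of the projection
of `f` onto the constants in `L²(V, d_{ω₁})`, then `D₁|c₁|² ≤ δ D₂/(D₁+D₂)`. -/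
theorem stmt18 {V : Type*} [Fintype V] [Nonempty V]
    (ω₁ ω₂ : V → V → ℝ) (hs1 : SymmW ω₁) (hs2 : SymmW ω₂)
    (hn1 : NonnegW ω₁) (hn2 : NonnegW ω₂)
    (hd1 : ∀ s, 0 < wdeg ω₁ s) (hd2 : ∀ s, 0 < wdeg ω₂ s)
    (D₁ D₂ δ : ℝ)
    (hD₁ : D₁ = ∑ s, wdeg ω₁ s) (hD₂ : D₂ = ∑ s, wdeg ω₂ s)
    (hδ : δ = ∑ s, (|wdeg ω₁ s - D₁ / (Fintype.card V : ℝ)| / D₁ +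
                    |wdeg ω₂ s - D₂ / (Fintype.card V : ℝ)| / D₂))
    (f : V → ℂ)
    (hmean : (∑ s, ((wdeg ω₁ s + wdeg ω₂ s : ℝ) : ℂ) * f s) = 0)
    (hnorm : (∑ s, (wdeg ω₁ s + wdeg ω₂ s) * ‖f s‖ ^ 2) = 1)
    (c₁ : ℂ) (hc₁ : c₁ = (D₁ : ℂ)⁻¹ * ∑ s, (wdeg ω₁ s : ℂ) * f s) :
    D₁ * ‖c₁‖ ^ 2 ≤ δ * D₂ / (D₁ + D₂) :=
  stmt18_general ω₁ ω₂ hd1 hd2 D₁ D₂ δ hD₁ hD₂ hδ f hmean hnorm c₁ hc₁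
end
end
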